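/- arXiv:1705.04691 — 4 statements merged into one kernel-verified Lean document; each statement's English description precedes it below -/
import Mathlib

section
/- Let M be a 4×4 complex matrix (indexed by (Fin 2) × (Fin 2) via Kronecker products). Suppose M is Hermitian, M anticommutes with both kinetic matrices Γ₁ = σx ⊗ σ0 and Γ₂ = σz ⊗ σz, and M commutes with both symmetry matrices S₁ = σ0 ⊗ σz and S₂ = σx ⊗ σx. Then there exists a real number m such that M = m • (σy ⊗ σz). Conversely, every real multiple of σy ⊗ σz satisfies all of these conditions. (This is the statement that the magnetic-translation-symmetric mass term of the π-flux Majorana Dirac Hamiltonian in symmetry class D is unique up to a real scalar.) -/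
open Matrix Complex

/-- The 2×2 identity Pauli matrix σ0. -/
noncomputable def σ0 : Matrix (Fin 2) (Fin 2) ℂ := !![1, 0; 0, 1]
/-- The Pauli matrix σx. -/
noncomputable def σx : Matrix (Fin 2) (Fin 2) ℂ := !![0, 1; 1, 0]
/-- The Pauli matrix σy. -/
noncomputable def σy : Matrix (Fin 2) (Fin 2) ℂ := !![0, -I; I, 0]
/-- The Pauli matrix σz. -/
noncomputable def σz : Matrix (Fin 2) (Fin 2) ℂ := !![1, 0; 0, -1]

/-- Kronecker product of two 2×2 complex matrices. -/
noncomputable def kron (A B : Matrix (Fin 2) (Fin 2) ℂ) :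
    Matrix (Fin 2 × Fin 2) (Fin 2 × Fin 2) ℂ :=
  Matrix.kroneckerMap (· * ·) A B

set_option maxHeartbeats 4000000

/-- The magnetic-translation-symmetric mass term of the π-flux Majorana Dirac
Hamiltonian in symmetry class D is unique up to a real scalar: a Hermitian 4×4
matrix `M` anticommuting with the kinetic matrices σx⊗σ0 and σz⊗σz and commuting
with the symmetry matrices σ0⊗σz and σx⊗σx is exactly a real multiple of σy⊗σz. -/
theorem class_D_mass_term_unique (M : Matrix (Fin 2 × Fin 2) (Fin 2 × Fin 2) ℂ) :
    (M.IsHermitian ∧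
      M * kron σx σ0 = -(kron σx σ0 * M) ∧
      M * kron σz σz = -(kron σz σz * M) ∧
      M * kron σ0 σz = kron σ0 σz * M ∧
      M * kron σx σx = kron σx σx * M) ↔
    ∃ m : ℝ, M = (m : ℂ) • kron σy σz := by
  constructor
  · rintro ⟨hH, h1, h2, h3, h4⟩
    rw [← Matrix.ext_iff] at h1 h2 h3 h4
    have e1a := h1 (0,0) (0,0)
    have e1b := h1 (0,1) (0,1)
    have e4 := h4 (0,0) (0,1)
    have hc := congr_fun (congr_fun hH.eq (0,0)) (1,0)
    simp [kron, σ0, σx, σz, Matrix.mul_apply, Matrix.conjTranspose_apply,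
      Fintype.sum_prod_type, Fin.sum_univ_two,
      -Prod.mk_zero_zero, -Prod.mk_one_one] at e1a e1b e4 hc
    have z11 : M (0,0) (0,0) = 0 := by
      have e := h2 (0,0) (0,0)
      simp [kron, σz, Matrix.mul_apply, Fintype.sum_prod_type, Fin.sum_univ_two,
        -Prod.mk_zero_zero, -Prod.mk_one_one] at e
      first | exact e | linear_combination e/2 | linear_combination -e/2
    have z14 : M (0,0) (1,1) = 0 := by
      have e := h2 (0,0) (1,1)
      simp [kron, σz, Matrix.mul_apply, Fintype.sum_prod_type, Fin.sum_univ_two,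
        -Prod.mk_zero_zero, -Prod.mk_one_one] at e
      first | exact e | linear_combination e/2 | linear_combination -e/2
    have z41 : M (1,1) (0,0) = 0 := by
      have e := h2 (1,1) (0,0)
      simp [kron, σz, Matrix.mul_apply, Fintype.sum_prod_type, Fin.sum_univ_two,
        -Prod.mk_zero_zero, -Prod.mk_one_one] at e
      first | exact e | linear_combination e/2 | linear_combination -e/2
    have z44 : M (1,1) (1,1) = 0 := by
      have e := h2 (1,1) (1,1)
      simp [kron, σz, Matrix.mul_apply, Fintype.sum_prod_type, Fin.sum_univ_two,
        -Prod.mk_zero_zero, -Prod.mk_one_one] at e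
      first | exact e | linear_combination e/2 | linear_combination -e/2
    have z22 : M (0,1) (0,1) = 0 := by
      have e := h2 (0,1) (0,1)
      simp [kron, σz, Matrix.mul_apply, Fintype.sum_prod_type, Fin.sum_univ_two,
        -Prod.mk_zero_zero, -Prod.mk_one_one] at e
      first | exact e | linear_combination e/2 | linear_combination -e/2
    have z23 : M (0,1) (1,0) = 0 := by
      have e := h2 (0,1) (1,0)
      simp [kron, σz, Matrix.mul_apply, Fintype.sum_prod_type, Fin.sum_univ_two,
        -Prod.mk_zero_zero, -Prod.mk_one_one] at e
      first | exact e | linear_combination e/2 | linear_combination -e/2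
    have z32 : M (1,0) (0,1) = 0 := by
      have e := h2 (1,0) (0,1)
      simp [kron, σz, Matrix.mul_apply, Fintype.sum_prod_type, Fin.sum_univ_two,
        -Prod.mk_zero_zero, -Prod.mk_one_one] at e
      first | exact e | linear_combination e/2 | linear_combination -e/2
    have z33 : M (1,0) (1,0) = 0 := by
      have e := h2 (1,0) (1,0)
      simp [kron, σz, Matrix.mul_apply, Fintype.sum_prod_type, Fin.sum_univ_two,
        -Prod.mk_zero_zero, -Prod.mk_one_one] at e
      first | exact e | linear_combination e/2 | linear_combination -e/2
    have z12 : M (0,0) (0,1) = 0 := by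
      have e := h3 (0,0) (0,1)
      simp [kron, σ0, σz, Matrix.mul_apply, Fintype.sum_prod_type, Fin.sum_univ_two,
        -Prod.mk_zero_zero, -Prod.mk_one_one] at e
      first | exact e | linear_combination e/2 | linear_combination -e/2
    have z21 : M (0,1) (0,0) = 0 := by
      have e := h3 (0,1) (0,0)
      simp [kron, σ0, σz, Matrix.mul_apply, Fintype.sum_prod_type, Fin.sum_univ_two,
        -Prod.mk_zero_zero, -Prod.mk_one_one] at e
      first | exact e | linear_combination e/2 | linear_combination -e/2
    have z34 : M (1,0) (1,1) = 0 := by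
      have e := h3 (1,0) (1,1)
      simp [kron, σ0, σz, Matrix.mul_apply, Fintype.sum_prod_type, Fin.sum_univ_two,
        -Prod.mk_zero_zero, -Prod.mk_one_one] at e
      first | exact e | linear_combination e/2 | linear_combination -e/2
    have z43 : M (1,1) (1,0) = 0 := by
      have e := h3 (1,1) (1,0)
      simp [kron, σ0, σz, Matrix.mul_apply, Fintype.sum_prod_type, Fin.sum_univ_two,
        -Prod.mk_zero_zero, -Prod.mk_one_one] at e
      first | exact e | linear_combination e/2 | linear_combination -e/2
    have hconj : (starRingEnd ℂ) (M (0,0) (1,0)) = -(M (0,0) (1,0)) := by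
      have h' := congrArg (starRingEnd ℂ) hc
      rw [Complex.conj_conj] at h'
      rw [← h']
      linear_combination e1a
    have h5 : (starRingEnd ℂ) (M (0,0) (1,0) * I) = M (0,0) (1,0) * I := by
      rw [_root_.map_mul, hconj, Complex.conj_I]; ring
    have hm : (((M (0,0) (1,0) * I).re : ℝ) : ℂ) = M (0,0) (1,0) * I :=
      Complex.conj_eq_iff_re.mp h5
    refine ⟨(M (0,0) (1,0) * I).re, ?_⟩
    rw [hm]
    ext ⟨i,j⟩ ⟨k,l⟩
    fin_cases i <;> fin_cases j <;> fin_cases k <;> fin_cases l <;>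
      simp [kron, σy, σz, Matrix.smul_apply, smul_eq_mul,
        -Prod.mk_zero_zero, -Prod.mk_one_one]
    · exact z11
    · exact z12
    · linear_combination M (0,0) (1,0) * Complex.I_mul_I
    · exact z14
    · exact z21
    · exact z22
    · exact z23
    · linear_combination e1b + e4 - M (0,0) (1,0) * Complex.I_mul_I
    · linear_combination e1a - M (0,0) (1,0) * Complex.I_mul_I
    · exact z32
    · exact z33
    · exact z34
    · exact z41
    · linear_combination - e4 + M (0,0) (1,0) * Complex.I_mul_I
    · exact z43
    · exact z44
  · rintro ⟨m, rfl⟩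
    refine ⟨?_, ?_, ?_, ?_, ?_⟩
    · rw [Matrix.IsHermitian]
      ext ⟨i,j⟩ ⟨k,l⟩
      fin_cases i <;> fin_cases j <;> fin_cases k <;> fin_cases l <;>
        simp [kron, σy, σz, Matrix.conjTranspose_apply, Complex.ext_iff]
    all_goals
      ext ⟨i,j⟩ ⟨k,l⟩
      fin_cases i <;> fin_cases j <;> fin_cases k <;> fin_cases l <;>
        simp [kron, σ0, σx, σy, σz, Matrix.mul_apply,
          Fintype.sum_prod_type, Fin.sum_univ_two] <;> ring
end

section
/- For real parameters t_x, t_y and momenta k_x, k_y ∈ ℝ, define the 2×2 complex Bloch matrix h(k_x,k_y) = (2 t_y sin k_y) • σz + (t_x sin k_x) • σx + (t_x (1 - cos k_x)) • σy. Then: (a) h(k_x,k_y) * h(k_x,k_y) = (4 t_y² sin² k_y + 2 t_x² (1 - cos k_x)) • (1 : Matrix), so the eigenvalues of h are ±√(4 t_y² sin² k_y + 2 t_x² (1 - cos k_x)); and (b) if t_x ≠ 0 and t_y ≠ 0, then the determinant of h(k_x,k_y) is zero if and only if k_x is an integer multiple of 2π and k_y is an integer multiple of π. (In the fundamental Brillouin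 zone this says the nearest-neighbor π-flux Majorana hopping model on the square lattice has exactly two gapless Majorana cones, at (k_x,k_y) = (0,0) and (0,π).) -/
open Matrix Complex Real

/-- The 2×2 Bloch matrix of the nearest-neighbor π-flux Majorana hopping model
on the square lattice, in the two-site magnetic unit cell basis. -/
noncomputable def bloch (tx ty kx ky : ℝ) : Matrix (Fin 2) (Fin 2) ℂ :=
  ((2 * ty * Real.sin ky : ℝ) : ℂ) • σz + ((tx * Real.sin kx : ℝ) : ℂ) • σx +
    ((tx * (1 - Real.cos kx) : ℝ) : ℂ) • σy

/-- (a) The Bloch matrix squares to a scalar, so its eigenvalues are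
±√(4t_y²sin²k_y + 2t_x²(1-cos k_x)); (b) for t_x ≠ 0 and t_y ≠ 0 its
determinant vanishes iff k_x ∈ 2πℤ and k_y ∈ πℤ: the nearest-neighbor π-flux
Majorana model has exactly two gapless Majorana cones, at (0,0) and (0,π). -/
theorem pi_flux_majorana_cones (tx ty kx ky : ℝ) :
    bloch tx ty kx ky * bloch tx ty kx ky =
      ((4 * ty ^ 2 * Real.sin ky ^ 2 + 2 * tx ^ 2 * (1 - Real.cos kx) : ℝ) : ℂ) •
        (1 : Matrix (Fin 2) (Fin 2) ℂ) ∧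
    (tx ≠ 0 → ty ≠ 0 →
      ((bloch tx ty kx ky).det = 0 ↔
        (∃ n : ℤ, kx = 2 * π * n) ∧ (∃ n : ℤ, ky = π * n))) := by
  have h1 : Complex.sin kx ^ 2 + Complex.cos kx ^ 2 = 1 := Complex.sin_sq_add_cos_sq kx
  constructor
  · ext i j
    fin_cases i <;> fin_cases j <;>
      simp [bloch, σx, σy, σz, Matrix.mul_apply, Fin.sum_univ_two, Matrix.one_apply,
        Complex.ofReal_sin, Complex.ofReal_cos] <;>
      first
        | linear_combination (tx:ℂ)^2 * h1 - (tx:ℂ)^2 * (1 - Complex.cos (kx:ℂ))^2 * Complex.I_sq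
        | ring
  · intro htx hty
    have hdet : (bloch tx ty kx ky).det =
        -(((2*ty*Real.sin ky)^2 + (tx*Real.sin kx)^2 + (tx*(1-Real.cos kx))^2 : ℝ) : ℂ) := by
      simp [bloch, σx, σy, σz, Matrix.det_fin_two, Complex.ofReal_sin, Complex.ofReal_cos]
      linear_combination (tx:ℂ)^2 * (1 - Complex.cos (kx:ℂ))^2 * Complex.I_sq
    rw [hdet]
    have hsum : (-(((2*ty*Real.sin ky)^2 + (tx*Real.sin kx)^2 + (tx*(1-Real.cos kx))^2 : ℝ) : ℂ) = 0)
        ↔ ((2*ty*Real.sin ky)^2 + (tx*Real.sin kx)^2 + (tx*(1-Real.cos kx))^2 : ℝ) = 0 := by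
      rw [neg_eq_zero]
      exact_mod_cast Complex.ofReal_eq_zero
    rw [hsum]
    constructor
    · intro h
      have h2 : (2*ty*Real.sin ky) = 0 ∧ (tx*Real.sin kx) = 0 ∧ (tx*(1-Real.cos kx)) = 0 := by
        constructor
        · nlinarith [sq_nonneg (2*ty*Real.sin ky), sq_nonneg (tx*Real.sin kx),
            sq_nonneg (tx*(1-Real.cos kx))]
        constructor
        · nlinarith [sq_nonneg (2*ty*Real.sin ky), sq_nonneg (tx*Real.sin kx),
            sq_nonneg (tx*(1-Real.cos kx))]
        · nlinarith [sq_nonneg (2*ty*Real.sin ky), sq_nonneg (tx*Real.sin kx),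
            sq_nonneg (tx*(1-Real.cos kx))]
      obtain ⟨ha, hb, hc⟩ := h2
      have hsy : Real.sin ky = 0 := by
        rcases mul_eq_zero.1 ha with h | h
        · rcases mul_eq_zero.1 h with h | h
          · norm_num at h
          · exact absurd h hty
        · exact h
      have hco : Real.cos kx = 1 := by
        rcases mul_eq_zero.1 hc with h | h
        · exact absurd h htx
        · linarith
      constructor
      · obtain ⟨n, hn⟩ := (Real.cos_eq_one_iff kx).1 hco
        exact ⟨n, by linarith [hn]⟩
      · obtain ⟨n, hn⟩ := Real.sin_eq_zero_iff.1 hsy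
        exact ⟨n, by linarith [hn]⟩
    · rintro ⟨⟨n, hn⟩, ⟨m, hm⟩⟩
      have hco : Real.cos kx = 1 := by
        rw [hn, show (2:ℝ) * π * n = n * (2 * π) by ring]
        exact Real.cos_int_mul_two_pi n
      have hsx : Real.sin kx = 0 := by
        have := Real.sin_sq_add_cos_sq kx
        nlinarith [this]
      have hsy : Real.sin ky = 0 := by
        rw [hm, mul_comm]
        exact Real.sin_int_mul_pi m
      rw [hsx, hsy, hco]
      ring
end

section
/- Let n be a positive natural number and for each k_x ∈ ℝ define the 2n×2n complex block matrix M(k_x) = fromBlocks 0 1 (exp(i k_x) • 1) 0, i.e. the block matrix with zero diagonal n×n blocks, identity upper-right block, and e^{i k_x} times the identity as lower-left block. Let W : ℝ → ℝ → Matrix (Fin n ⊕ Fin n) (Fin n ⊕ Fin n) ℂ be a family of matrices satisfying the magnetic-translation constraint W(k_x, k_y + π) = W(k_x, k_y) * M(k_x) for all k_x, k_y ∈ ℝ, and suppose (det W(0,0))² = 1 and (det W(π,0))² = 1. Then det W(0,0) · det W(0,π) · det W(π,0) · det W(π,π) = (-1)^n. In particular, if n is odd, the product of the determinants of W over the four time-reversal-invariant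 momenta (0,0), (0,π), (π,0), (π,π) equals -1. (This proves that for free fermions with an odd number n of Majorana modes per unit cell and π flux per unit cell, any gapped Bloch band structure has odd class-D topological index ν, hence is a topological superconductor.) -/
/-! Shifting `k_y` by `π` multiplies `det W` by `det M(k_x) = (-e^{i k_x})^n`, which is `(-1)^n` at
`k_x = 0` and `1` at `k_x = π`; the product over the four momenta is then
`(det W(0,0))² (det W(π,0))² (-1)^n = (-1)^n`. -/

open Matrix Complex Real

/-- The magnetic translation matrix `M(k_x)`: block matrix with zero diagonal
n×n blocks, identity upper-right block and e^{i k_x}·1 lower-left block. -/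
noncomputable def magTransBlock (n : ℕ) (kx : ℝ) :
    Matrix (Fin n ⊕ Fin n) (Fin n ⊕ Fin n) ℂ :=
  Matrix.fromBlocks 0 1 (Complex.exp (Complex.I * kx) • 1) 0

namespace Matrix

variable {n R : Type*} [Fintype n] [DecidableEq n] [CommRing R]

theorem det_fromBlocks_zero_one_one_zero :
    (fromBlocks 0 1 1 0 : Matrix (n ⊕ n) (n ⊕ n) R).det = (-1) ^ Fintype.card n := by
  have hfactor : fromBlocks (1 : Matrix n n R) 0 1 1 * fromBlocks 0 1 1 0 =
      fromBlocks 0 1 1 (1 : Matrix n n R) := by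
    simp [fromBlocks_multiply]
  have hdet := congrArg det hfactor
  rw [det_mul, det_fromBlocks_zero₁₂, det_fromBlocks_one₂₂] at hdet
  simpa [det_neg] using hdet

theorem det_fromBlocks_zero₁₁_zero₂₂ (B C : Matrix n n R) :
    (fromBlocks 0 B C 0).det = (-1) ^ Fintype.card n * B.det * C.det := by
  have hfactor :
      fromBlocks 0 B C 0 = fromBlocks 0 1 1 (0 : Matrix n n R) * fromBlocks C 0 0 B := by
    simp [fromBlocks_multiply]
  rw [hfactor, det_mul, det_fromBlocks_zero_one_one_zero, det_fromBlocks_zero₁₂]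
  ring

end Matrix

theorem det_magTransBlock (n : ℕ) (kx : ℝ) :
    (magTransBlock n kx).det = (-Complex.exp (Complex.I * kx)) ^ n := by
  rw [magTransBlock, det_fromBlocks_zero₁₁_zero₂₂, det_smul,
    neg_pow (Complex.exp _)]
  simp only [det_one, Fintype.card_fin, mul_one]

theorem class_D_free_fermion_LSM_general (n : ℕ)
    (W : ℝ → ℝ → Matrix (Fin n ⊕ Fin n) (Fin n ⊕ Fin n) ℂ)
    (hW : ∀ kx ky : ℝ, W kx (ky + π) = W kx ky * magTransBlock n kx)
    (h00 : (W 0 0).det ^ 2 = 1)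
    (hπ0 : (W π 0).det ^ 2 = 1) :
    (W 0 0).det * (W 0 π).det * (W π 0).det * (W π π).det = (-1 : ℂ) ^ n := by
  have hshift (kx : ℝ) :
      (W kx π).det = (W kx 0).det * (-Complex.exp (Complex.I * kx)) ^ n := by
    simpa [det_magTransBlock] using congrArg det (hW kx 0)
  have hexp_pi : Complex.exp (Complex.I * π) = -1 := by
    rw [mul_comm, Complex.exp_pi_mul_I]
  rw [hshift 0, hshift π, hexp_pi]
  simp only [ofReal_zero, mul_zero, Complex.exp_zero, neg_neg, one_pow, mul_one]
  linear_combination ((-1) ^ n * (W π 0).det ^ 2) * h00 + (-1) ^ n * hπ0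

/-- For free fermions with n Majorana modes per unit cell and π flux per unit
cell, the magnetic-translation constraint on the Bloch wavefunctions W forces
the product of det W over the four time-reversal-invariant momenta to equal
(-1)^n; for n odd this is -1, i.e. the class-D index ν is odd and any gapped
band structure is a topological superconductor. -/
theorem class_D_free_fermion_LSM (n : ℕ) (hn : 0 < n)
    (W : ℝ → ℝ → Matrix (Fin n ⊕ Fin n) (Fin n ⊕ Fin n) ℂ)
    (hW : ∀ kx ky : ℝ, W kx (ky + π) = W kx ky * magTransBlock n kx)
    (h00 : (W 0 0).det ^ 2 = 1)
    (hπ0 : (W π 0).det ^ 2 = 1) :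
    (W 0 0).det * (W 0 π).det * (W π 0).det * (W π π).det = (-1 : ℂ) ^ n :=
  class_D_free_fermion_LSM_general n W hW h00 hπ0
end

section
/- Let L_x and L_y be positive natural numbers, and let n : ZMod L_x × ZMod L_y → ℤ be a charge configuration on the L_x × L_y torus with total charge N = Σ_{(x,y)} n(x,y). Define the polarization sum S(n) = Σ_{(x,y)} (x.val : ℤ) · n(x,y), and define the translated configuration n' by n'(x,y) = n(x-1, y). Then S(n') ≡ S(n) + N (mod L_x), i.e. (L_x : ℤ) divides S(n') - S(n) - N. Consequently, the polarization operator P_x = exp((2πi/L_x) Σ_r x n̂_r) satisfies T_x P_x T_x⁻¹ = e^{2πi N / L_x} P_x on any state of total charge N. -/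
/-- On the L_x × L_y torus, translating an integer charge configuration n by
one unit cell in the x̂-direction changes the polarization sum
S(n) = Σ x·n(x,y) by the total charge N = Σ n, modulo L_x.  Consequently the
polarization operator P_x = exp((2πi/L_x)Σ_r x n̂_r) satisfies
T_x P_x T_x⁻¹ = e^{2πi N/L_x} P_x on states of total charge N. -/
theorem polarization_shift_of_translation (Lx Ly : ℕ) [NeZero Lx] [NeZero Ly]
    (n : ZMod Lx × ZMod Ly → ℤ) :
    (Lx : ℤ) ∣
      (∑ p : ZMod Lx × ZMod Ly, (p.1.val : ℤ) * n (p.1 - 1, p.2)) -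
        (∑ p : ZMod Lx × ZMod Ly, (p.1.val : ℤ) * n p) -
        (∑ p : ZMod Lx × ZMod Ly, n p) := by
  rw [← ZMod.intCast_zmod_eq_zero_iff_dvd]
  push_cast [ZMod.natCast_val, ZMod.intCast_cast, ZMod.cast_id]
  have key : (∑ p : ZMod Lx × ZMod Ly, (p.1 : ZMod Lx) * (n (p.1 - 1, p.2) : ZMod Lx))
      = ∑ p : ZMod Lx × ZMod Ly, ((p.1 : ZMod Lx) + 1) * (n p : ZMod Lx) := by
    apply Fintype.sum_equiv (Equiv.prodCongr (Equiv.subRight (1 : ZMod Lx)) (Equiv.refl _))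
    intro p
    rcases p with ⟨a, b⟩; simp [Equiv.subRight]
  rw [key]
  simp [add_mul, Finset.sum_add_distrib]
end
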